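/- Let M : [0,∞) → ℝ be continuous and let η ∈ ℝ. Then there exists a unique continuously differentiable function w : [0,∞) → ℝ such that w(0) = 1 and w′(t) + η w(t) + ∫_0^t M(t-s) w(s) ds = 0 for all t ≥ 0. -/

import Mathlib

open Set MeasureTheory

/-- Convolution on `[0,∞)` (via signed interval integral): `(f*g)(t) = ∫_0^t f(t-s) g(s) ds`. -/
noncomputable def conv (f g : ℝ → ℝ) : ℝ → ℝ :=
  fun t => ∫ s in (0:ℝ)..t, f (t - s) * g s

/-- `j`-fold convolution power of `M`, with the conventions `M^{*0} = 0` and `M^{*1} = M`. -/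
noncomputable def convPow (M : ℝ → ℝ) : ℕ → ℝ → ℝ
  | 0 => fun _ => 0
  | 1 => M
  | (j+2) => conv M (convPow M (j+1))

/-- The norm `‖f‖_{C^k([0,t])} = ∑_{l=0}^k max_{0 ≤ τ ≤ t} |f^{(l)}(τ)|`,
derivatives taken within `[0,∞)`. -/
noncomputable def CkNorm (k : ℕ) (t : ℝ) (f : ℝ → ℝ) : ℝ :=
  ∑ l ∈ Finset.range (k+1), ⨆ τ : Set.Icc (0:ℝ) t, |iteratedDerivWithin l f (Set.Ici 0) τ|

/-- `w` is a `C¹` solution on `[0,∞)` of the memory ODE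
`w′(t) + η w(t) + ∫_0^t M(t-s) w(s) ds = 0` with `w(0) = 1`
(the derivative at `0` being taken within `[0,∞)`). -/
noncomputable def IsMemorySol (M : ℝ → ℝ) (η : ℝ) (w : ℝ → ℝ) : Prop :=
  ContDiffOn ℝ 1 w (Set.Ici 0) ∧ w 0 = 1 ∧
    ∀ t : ℝ, 0 ≤ t →
      derivWithin w (Set.Ici 0) t + η * w t + (∫ s in (0:ℝ)..t, M (t - s) * w s) = 0


/-!
Integrating once, a `C¹` solution is the same as a continuous solution on `[0, ∞)` of the Volterra
equation `w = picard K η w`, where `K` is `M` extended continuously to `ℝ` and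
`picard K η w t = 1 - ∫₀ᵗ (η w(s) + (K * w)(s)) ds`. On `[0, T]`, with `|K| ≤ C` there and
`L = |η| + C T`, each application of `picard` to the difference of two functions gains a factor
`L t / (k + 1)`, so the `n`-th iterate is Lipschitz with constant `(L T)ⁿ / n!`. For large `n` it is
a contraction of `C([0, T])`, which gives a unique solution on every `[0, T]`; by uniqueness these
glue to a solution on `[0, ∞)`.
-/

open Function intervalIntegral

section Convolution

variable {f f₁ f₂ g g₁ g₂ : ℝ → ℝ} {t : ℝ}

theorem continuous_conv (hf : Continuous f) (hg : Continuous g) : Continuous (conv f g) :=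
  continuous_parametric_intervalIntegral_of_continuous (a₀ := 0)
    ((hf.comp (continuous_fst.sub continuous_snd)).mul (hg.comp continuous_snd)) continuous_id

theorem conv_congr_left (ht : 0 ≤ t) (h : EqOn f₁ f₂ (Icc 0 t)) : conv f₁ g t = conv f₂ g t :=
  integral_congr fun u hu => by
    rw [uIcc_of_le ht] at hu
    simp only [h ⟨sub_nonneg.2 hu.2, sub_le_self t hu.1⟩]

theorem conv_congr_right (ht : 0 ≤ t) (h : EqOn g₁ g₂ (Icc 0 t)) : conv f g₁ t = conv f g₂ t :=
  integral_congr fun u hu => by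
    rw [uIcc_of_le ht] at hu
    simp only [h hu]

theorem conv_sub_right (hf : Continuous f) (hg₁ : Continuous g₁) (hg₂ : Continuous g₂) (t : ℝ) :
    conv f (g₁ - g₂) t = conv f g₁ t - conv f g₂ t := by
  simp only [conv, Pi.sub_apply, mul_sub]
  exact integral_sub (Continuous.intervalIntegrable (by fun_prop) _ _)
    (Continuous.intervalIntegrable (by fun_prop) _ _)

theorem abs_conv_le {C b : ℝ} (ht : 0 ≤ t) (hf : ∀ u ∈ Icc 0 t, |f u| ≤ C)
    (hg : ∀ u ∈ Icc 0 t, |g u| ≤ b) : |conv f g t| ≤ C * b * t := by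
  have hC : 0 ≤ C := (abs_nonneg _).trans (hf 0 ⟨le_rfl, ht⟩)
  have := norm_integral_le_of_norm_le_const (a := 0) (b := t) (f := fun u => f (t - u) * g u)
    (C := C * b) fun u hu => by
      rw [uIoc_of_le ht] at hu
      rw [Real.norm_eq_abs, abs_mul]
      exact mul_le_mul (hf _ ⟨sub_nonneg.2 hu.2, sub_le_self t hu.1.le⟩) (hg _ ⟨hu.1.le, hu.2⟩)
        (abs_nonneg _) hC
  simpa [conv, abs_of_nonneg ht] using this

end Convolution

section Picard

variable (K : C(ℝ, ℝ)) (η : ℝ)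

noncomputable def memoryRhs (e : ℝ → ℝ) : ℝ → ℝ := fun t => η * e t + conv K e t

noncomputable def picard (e : ℝ → ℝ) : ℝ → ℝ := fun t => 1 - ∫ s in (0:ℝ)..t, memoryRhs K η e s

variable {K η} {e e₁ e₂ : ℝ → ℝ} {t : ℝ}

theorem continuous_memoryRhs (he : Continuous e) : Continuous (memoryRhs K η e) :=
  (continuous_const.mul he).add (continuous_conv K.continuous he)

theorem hasDerivAt_picard (he : Continuous e) (t : ℝ) :
    HasDerivAt (picard K η e) (-memoryRhs K η e t) t :=
  (((continuous_memoryRhs he).integral_hasStrictDerivAt 0 t).hasDerivAt.const_sub 1)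

theorem continuous_picard (he : Continuous e) : Continuous (picard K η e) :=
  continuous_iff_continuousAt.2 fun t => (hasDerivAt_picard he t).continuousAt

theorem contDiff_picard (he : Continuous e) : ContDiff ℝ 1 (picard K η e) := by
  rw [contDiff_one_iff_deriv]
  refine ⟨fun t => (hasDerivAt_picard he t).differentiableAt, ?_⟩
  rw [show deriv (picard K η e) = _ from funext fun t => (hasDerivAt_picard he t).deriv]
  exact (continuous_memoryRhs he).neg

theorem picard_zero : picard K η e 0 = 1 := by simp [picard]

theorem memoryRhs_congr (ht : 0 ≤ t) (h : EqOn e₁ e₂ (Icc 0 t)) :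
    memoryRhs K η e₁ t = memoryRhs K η e₂ t := by
  rw [memoryRhs, memoryRhs, h ⟨ht, le_rfl⟩, conv_congr_right ht h]

theorem picard_congr (ht : 0 ≤ t) (h : EqOn e₁ e₂ (Icc 0 t)) :
    picard K η e₁ t = picard K η e₂ t :=
  congrArg (1 - ·) <| integral_congr fun s hs => by
    rw [uIcc_of_le ht] at hs
    exact memoryRhs_congr hs.1 (h.mono (Icc_subset_Icc_right hs.2))

theorem memoryRhs_sub (he₁ : Continuous e₁) (he₂ : Continuous e₂) :
    memoryRhs K η (e₁ - e₂) = memoryRhs K η e₁ - memoryRhs K η e₂ := by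
  ext t
  simp only [memoryRhs, Pi.sub_apply, conv_sub_right K.continuous he₁ he₂]
  ring

theorem picard_sub (he₁ : Continuous e₁) (he₂ : Continuous e₂) (t : ℝ) :
    picard K η e₁ t - picard K η e₂ t = -∫ s in (0:ℝ)..t, memoryRhs K η (e₁ - e₂) s := by
  rw [memoryRhs_sub he₁ he₂, Pi.sub_def,
    integral_sub ((continuous_memoryRhs he₁).intervalIntegrable _ _)
      ((continuous_memoryRhs he₂).intervalIntegrable _ _)]
  simp only [picard]
  ring

variable {T C : ℝ}

theorem abs_memoryRhs_le {s b : ℝ} (hK : ∀ u ∈ Icc 0 T, |K u| ≤ C) (hs : s ∈ Icc 0 T)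
    (he : ∀ u ∈ Icc 0 s, |e u| ≤ b) : |memoryRhs K η e s| ≤ (|η| + C * T) * b := by
  have hC : 0 ≤ C := (abs_nonneg _).trans (hK 0 ⟨le_rfl, hs.1.trans hs.2⟩)
  have hb : 0 ≤ b := (abs_nonneg _).trans (he s ⟨hs.1, le_rfl⟩)
  have hconv : |conv K e s| ≤ C * b * s :=
    abs_conv_le hs.1 (fun u hu => hK u ⟨hu.1, hu.2.trans hs.2⟩) he
  calc |memoryRhs K η e s| ≤ |η| * |e s| + |conv K e s| := by
        rw [memoryRhs, ← abs_mul]; exact abs_add_le _ _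
    _ ≤ |η| * b + C * b * T := by
        gcongr
        · exact he s ⟨hs.1, le_rfl⟩
        · exact hconv.trans (by gcongr; exact hs.2)
    _ = (|η| + C * T) * b := by ring

theorem abs_picard_sub_le {B : ℝ} {k : ℕ} (hK : ∀ u ∈ Icc 0 T, |K u| ≤ C)
    (he₁ : Continuous e₁) (he₂ : Continuous e₂) (hB : 0 ≤ B) (ht : t ∈ Icc 0 T)
    (h : ∀ u ∈ Icc 0 t, |e₁ u - e₂ u| ≤ B * ((|η| + C * T) * u) ^ k / k.factorial) :
    |picard K η e₁ t - picard K η e₂ t|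
      ≤ B * ((|η| + C * T) * t) ^ (k + 1) / (k + 1).factorial := by
  set L := |η| + C * T with hL_def
  have hL : 0 ≤ L := add_nonneg (abs_nonneg η)
    (mul_nonneg ((abs_nonneg _).trans (hK 0 ⟨le_rfl, ht.1.trans ht.2⟩)) (ht.1.trans ht.2))
  have hstep : ∀ s ∈ Ioc 0 t, ‖memoryRhs K η (e₁ - e₂) s‖ ≤ B * L ^ (k + 1) / k.factorial * s ^ k :=
    fun s hs => by
      refine (abs_memoryRhs_le (b := B * (L * s) ^ k / k.factorial) hK ⟨hs.1.le, hs.2.trans ht.2⟩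
        fun u hu => ?_).trans_eq (by rw [mul_pow, hL_def]; ring)
      refine (h u ⟨hu.1, hu.2.trans hs.2⟩).trans ?_
      gcongr
      exacts [mul_nonneg hL hu.1, hu.2]
  rw [picard_sub he₁ he₂, abs_neg]
  calc |∫ s in (0:ℝ)..t, memoryRhs K η (e₁ - e₂) s|
      ≤ ∫ s in (0:ℝ)..t, B * L ^ (k + 1) / k.factorial * s ^ k :=
        norm_integral_le_of_norm_le ht.1 (ae_of_all _ hstep)
          (Continuous.intervalIntegrable (by fun_prop) _ _)
    _ = B * (L * t) ^ (k + 1) / (k + 1).factorial := by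
        rw [intervalIntegral.integral_const_mul, integral_pow, zero_pow k.succ_ne_zero, sub_zero,
          Nat.factorial_succ, Nat.cast_mul, Nat.cast_succ, mul_pow]
        field_simp

end Picard

section Interval

variable (K : C(ℝ, ℝ)) (η : ℝ) {T : ℝ} (hT : 0 ≤ T)

noncomputable def picardOn (f : C(Icc (0:ℝ) T, ℝ)) : C(Icc (0:ℝ) T, ℝ) :=
  ⟨fun t => picard K η (IccExtend hT f) t,
    (continuous_picard f.continuous.Icc_extend').comp continuous_subtype_val⟩

variable {K η hT}

theorem abs_iterate_picardOn_sub_le {C : ℝ} (hK : ∀ u ∈ Icc 0 T, |K u| ≤ C) (k : ℕ)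
    (f g : C(Icc (0:ℝ) T, ℝ)) (t : Icc (0:ℝ) T) :
    |(picardOn K η hT)^[k] f t - (picardOn K η hT)^[k] g t|
      ≤ dist f g * ((|η| + C * T) * t) ^ k / k.factorial := by
  induction k generalizing t with
  | zero => simpa [← Real.dist_eq] using ContinuousMap.dist_apply_le_dist t
  | succ k ih =>
    rw [iterate_succ_apply', iterate_succ_apply']
    refine abs_picard_sub_le hK (ContinuousMap.continuous _).Icc_extend'
      (ContinuousMap.continuous _).Icc_extend' dist_nonneg t.2 fun u hu => ?_
    have hu' : u ∈ Icc 0 T := ⟨hu.1, hu.2.trans t.2.2⟩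
    rw [IccExtend_of_mem hT _ hu', IccExtend_of_mem hT _ hu']
    exact ih ⟨u, hu'⟩

theorem exists_contractingWith_iterate_picardOn :
    ∃ (n : ℕ) (q : NNReal), ContractingWith q (picardOn K η hT)^[n] := by
  obtain ⟨C, hC⟩ := (isCompact_Icc (a := 0) (b := T)).exists_bound_of_continuousOn
    K.continuous.continuousOn
  set L := |η| + C * T
  have hL : 0 ≤ L :=
    add_nonneg (abs_nonneg η) (mul_nonneg ((norm_nonneg _).trans (hC 0 ⟨le_rfl, hT⟩)) hT)
  obtain ⟨n, hn⟩ := ((FloorSemiring.tendsto_pow_div_factorial_atTop (L * T)).eventually_lt_const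
    one_pos).exists
  have hq : 0 ≤ (L * T) ^ n / n.factorial := by positivity
  refine ⟨n, ⟨_, hq⟩, hn, LipschitzWith.of_dist_le_mul fun f g => ?_⟩
  change _ ≤ (L * T) ^ n / n.factorial * dist f g
  rw [ContinuousMap.dist_le (mul_nonneg hq dist_nonneg)]
  intro t
  refine (abs_iterate_picardOn_sub_le hC n f g t).trans ?_
  rw [mul_div_assoc, mul_comm]
  gcongr
  exacts [mul_nonneg hL t.2.1, t.2.2]

theorem isFixedPt_picardOn_domRestrict {e : ℝ → ℝ} (he : ContinuousOn e (Icc 0 T))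
    (hfix : ∀ t ∈ Icc 0 T, e t = picard K η e t) :
    IsFixedPt (picardOn K η hT) ⟨(Icc 0 T).domRestrict e, he.domRestrict⟩ :=
  ContinuousMap.ext fun t => (picard_congr t.2.1 fun _ hu =>
    IccExtend_of_mem hT _ ⟨hu.1, hu.2.trans t.2.2⟩).trans (hfix t t.2).symm

theorem exists_continuous_eq_picard_on_Icc (hT : 0 ≤ T) :
    ∃ e : ℝ → ℝ, Continuous e ∧ ∀ t ∈ Icc 0 T, e t = picard K η e t := by
  obtain ⟨n, q, hq⟩ := exists_contractingWith_iterate_picardOn (K := K) (η := η) (hT := hT)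
  have hx := hq.isFixedPt_fixedPoint_iterate
  refine ⟨IccExtend hT (hq.fixedPoint _), (ContinuousMap.continuous _).Icc_extend', fun t ht => ?_⟩
  rw [IccExtend_of_mem hT _ ht]
  exact (DFunLike.congr_fun hx ⟨t, ht⟩).symm

theorem eqOn_Icc_of_eq_picard {e₁ e₂ : ℝ → ℝ} (he₁ : ContinuousOn e₁ (Icc 0 T))
    (he₂ : ContinuousOn e₂ (Icc 0 T)) (h₁ : ∀ t ∈ Icc 0 T, e₁ t = picard K η e₁ t)
    (h₂ : ∀ t ∈ Icc 0 T, e₂ t = picard K η e₂ t) : EqOn e₁ e₂ (Icc 0 T) := fun t ht => by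
  have hT : 0 ≤ T := ht.1.trans ht.2
  obtain ⟨n, q, hq⟩ := exists_contractingWith_iterate_picardOn (K := K) (η := η) (hT := hT)
  exact DFunLike.congr_fun (hq.fixedPoint_unique'
    ((isFixedPt_picardOn_domRestrict (hT := hT) he₁ h₁).iterate n)
    ((isFixedPt_picardOn_domRestrict (hT := hT) he₂ h₂).iterate n)) ⟨t, ht⟩

end Interval

theorem exists_continuous_eqOn_Icc_of_eqOn {g : ℕ → ℝ → ℝ} (hg : ∀ n, Continuous (g n))
    (hcompat : ∀ m n : ℕ, EqOn (g m) (g n) (Icc 0 (min (m : ℝ) n))) :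
    ∃ w : ℝ → ℝ, Continuous w ∧ ∀ n : ℕ, EqOn w (g n) (Icc 0 n) := by
  -- clamping at `0` makes `w` agree with `g n` composed with `max · 0` on all of `(-∞, n]`
  let w t := g ⌈t⌉₊ (max t 0)
  have hw : ∀ (n : ℕ) (t : ℝ), t ≤ n → w t = g n (max t 0) := fun n t ht =>
    hcompat _ _ ⟨le_max_right t 0,
      le_min (max_le (Nat.le_ceil t) (Nat.cast_nonneg _)) (max_le ht (Nat.cast_nonneg _))⟩
  refine ⟨w, continuous_iff_continuousAt.2 fun t₀ => ?_, fun n t ht => ?_⟩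
  · have ht₀ : t₀ < ((⌈t₀⌉₊ + 1 : ℕ) : ℝ) := by
      push_cast
      linarith [Nat.le_ceil t₀]
    have hc : Continuous fun t => g (⌈t₀⌉₊ + 1) (max t 0) :=
      (hg _).comp (continuous_id.max continuous_const)
    refine hc.continuousAt.congr ?_
    filter_upwards [Iio_mem_nhds ht₀] with t ht
    exact (hw _ t ht.le).symm
  · rw [hw n t ht.2, max_eq_left ht.1]

theorem exists_continuous_eq_picard_on_Ici (K : C(ℝ, ℝ)) (η : ℝ) :
    ∃ w : ℝ → ℝ, Continuous w ∧ ∀ t, 0 ≤ t → w t = picard K η w t := by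
  choose g hg hfix using fun n : ℕ => exists_continuous_eq_picard_on_Icc (K := K) (η := η) n.cast_nonneg
  obtain ⟨w, hw, hwg⟩ := exists_continuous_eqOn_Icc_of_eqOn hg fun m n =>
    eqOn_Icc_of_eq_picard (hg m).continuousOn (hg n).continuousOn
      (fun t ht => hfix m t ⟨ht.1, ht.2.trans (min_le_left _ _)⟩)
      (fun t ht => hfix n t ⟨ht.1, ht.2.trans (min_le_right _ _)⟩)
  refine ⟨w, hw, fun t ht => ?_⟩
  have htn : t ∈ Icc (0 : ℝ) ⌈t⌉₊ := ⟨ht, Nat.le_ceil t⟩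
  rw [hwg _ htn, hfix _ t htn,
    picard_congr ht fun s hs => (hwg _ ⟨hs.1, hs.2.trans htn.2⟩).symm]

section Solutions

variable {M : ℝ → ℝ} {K : C(ℝ, ℝ)} {η : ℝ} {w : ℝ → ℝ}

theorem isMemorySol_of_eq_picard (hKM : EqOn K M (Ici 0)) (hw : Continuous w)
    (hfix : ∀ t, 0 ≤ t → w t = picard K η w t) : IsMemorySol M η w := by
  have hderiv : ∀ t, 0 ≤ t → derivWithin w (Ici 0) t = -memoryRhs K η w t := fun t ht =>
    ((hasDerivAt_picard hw t).hasDerivWithinAt.congr (fun s hs => hfix s hs)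
      (hfix t ht)).derivWithin (uniqueDiffOn_Ici 0 t ht)
  refine ⟨(contDiff_picard hw).contDiffOn.congr hfix, (hfix 0 le_rfl).trans picard_zero,
    fun t ht => ?_⟩
  rw [hderiv t ht, memoryRhs, conv_congr_left ht (hKM.mono Icc_subset_Ici_self)]
  change -(η * w t + conv M w t) + η * w t + conv M w t = 0
  ring

theorem IsMemorySol.eq_picard (hKM : EqOn K M (Ici 0)) (hw : IsMemorySol M η w) {t : ℝ}
    (ht : 0 ≤ t) : w t = picard K η w t := by
  obtain ⟨hreg, hw0, hode⟩ := hw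
  have hderiv : ∀ s, 0 ≤ s → derivWithin w (Ici 0) s = -memoryRhs K η w s := fun s hs => by
    have := hode s hs
    change _ + _ + conv M w s = 0 at this
    rw [memoryRhs, conv_congr_left hs (hKM.mono Icc_subset_Ici_self)]
    linarith
  have hftc : ∫ s in (0:ℝ)..t, derivWithin w (Ici 0) s = w t - w 0 :=
    integral_eq_sub_of_hasDeriv_right_of_le ht (hreg.continuousOn.mono Icc_subset_Ici_self)
      (fun s hs => ((hreg.differentiableOn one_ne_zero s hs.1.le).hasDerivWithinAt.hasDerivAt
        (Ici_mem_nhds hs.1)).hasDerivWithinAt)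
      (((hreg.continuousOn_derivWithin (uniqueDiffOn_Ici 0) le_rfl).mono
        Icc_subset_Ici_self).intervalIntegrable_of_Icc ht)
  have hint : ∫ s in (0:ℝ)..t, derivWithin w (Ici 0) s = -∫ s in (0:ℝ)..t, memoryRhs K η w s := by
    rw [← intervalIntegral.integral_neg]
    exact integral_congr fun s hs => hderiv s (by rw [uIcc_of_le ht] at hs; exact hs.1)
  simp only [picard]
  linarith

end Solutions

/-- For `M` continuous on `[0,∞)` and `η ∈ ℝ`, the memory ODE
`w′ + η w + ∫_0^t M(t-s) w(s) ds = 0`, `w(0) = 1`, has a `C¹` solution on `[0,∞)`,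
and any two such solutions agree on `[0,∞)`. -/
theorem memory_ode_exists_unique
    (M : ℝ → ℝ) (hM : ContinuousOn M (Set.Ici 0)) (η : ℝ) :
    (∃ w : ℝ → ℝ, IsMemorySol M η w) ∧
      ∀ w₁ w₂ : ℝ → ℝ, IsMemorySol M η w₁ → IsMemorySol M η w₂ →
        ∀ t : ℝ, 0 ≤ t → w₁ t = w₂ t := by
  let K : C(ℝ, ℝ) :=
    ⟨fun t => M (max t 0), hM.comp_continuous (continuous_id.max continuous_const) fun t =>
      le_max_right t 0⟩
  have hKM : EqOn K M (Ici 0) := fun t ht => congrArg M (max_eq_left ht)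
  refine ⟨?_, fun w₁ w₂ h₁ h₂ t ht => ?_⟩
  · obtain ⟨w, hw, hfix⟩ := exists_continuous_eq_picard_on_Ici K η
    exact ⟨w, isMemorySol_of_eq_picard hKM hw hfix⟩
  · exact eqOn_Icc_of_eq_picard (h₁.1.continuousOn.mono Icc_subset_Ici_self)
      (h₂.1.continuousOn.mono Icc_subset_Ici_self)
      (fun s hs => h₁.eq_picard hKM hs.1)
      (fun s hs => h₂.eq_picard hKM hs.1) ⟨ht, le_rfl⟩
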